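/- No two distinct codes are unifiable: if α and γ are distinct nonempty words over 𝒜, then ͞α* ∩ ͞γ* = ∅, i.e., no substitution instance of an element of ͞α equals a substitution instance of an element of ͞γ. -/
import Mathlib


namespace PC

/-- `{→}`-formulas over a countably infinite set of propositional variables. -/
inductive Fml : Type where
  | var : ℕ → Fml
  | imp : Fml → Fml → Fml
deriving DecidableEq

namespace Fml

/-- Application of a substitution to a formula. -/
def subst (σ : ℕ → Fml) : Fml → Fml
  | var n => σ n
  | imp A B => imp (subst σ A) (subst σ B)

/-- The set of variables of a formula. -/
def fvars : Fml → Finset ℕ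
  | var n => {n}
  | imp A B => fvars A ∪ fvars B

/-- Derivability from a set of axioms by modus ponens and substitution. -/
inductive Deriv (P : Set Fml) : Fml → Prop
  | ax {A : Fml} : A ∈ P → Deriv P A
  | mp {A B : Fml} : Deriv P A → Deriv P (imp A B) → Deriv P B
  | sub {A : Fml} (σ : ℕ → Fml) : Deriv P A → Deriv P (subst σ A)

end Fml

/-- `B̂`: the result of substituting `B` for the variable `x` (= `var 0`) in `x̂`. -/
def hat (xhat B : Fml) : Fml := Fml.subst (fun n => if n = 0 then B else Fml.var n) xhat

/-- `A ∘ B := ((B̂ → B̂) → B̂) → (Â → ((B̂ → B̂) → B̂))`. -/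
def circ (xhat A B : Fml) : Fml :=
  .imp (.imp (.imp (hat xhat B) (hat xhat B)) (hat xhat B))
    (.imp (hat xhat A) (.imp (.imp (hat xhat B) (hat xhat B)) (hat xhat B)))

/-- `A · B := ((A → A) → A) ∘ B`. -/
def dot (xhat A B : Fml) : Fml := circ xhat (.imp (.imp A A) A) B

/-- `Cform i` is the formula `p → (p → … (p → p))` with `i` antecedents `p`,
where `p := var 0`. -/
def Cform : ℕ → Fml
  | 0 => .var 0
  | n + 1 => .imp (.var 0) (Cform n)

/-- The code of the letter `aᵢ` (letters of the alphabet `𝒜 = {a₁, …, a_m}` are the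
elements of `Fin m`, the letter `a : Fin m` standing for `a_{a+1}`): `Cᵢ ∘ p`. -/
def letterCode (xhat : Fml) {m : ℕ} (a : Fin m) : Fml :=
  circ xhat (Cform (a.val + 1)) (.var 0)

/-- Formal alphabetic-formula trees over the alphabet `Fin m`. -/
inductive ATree (m : ℕ) : Type where
  | leaf : Fin m → ATree m
  | node : ATree m → ATree m → ATree m

/-- The word associated with an alphabetic formula. -/
def ATree.word {m : ℕ} : ATree m → List (Fin m)
  | .leaf a => [a]
  | .node l r => l.word ++ r.word

/-- The `{→}`-formula denoted by an alphabetic-formula tree. -/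
def ATree.toFml {m : ℕ} (xhat : Fml) : ATree m → Fml
  | .leaf a => letterCode xhat a
  | .node l r => dot xhat (l.toFml xhat) (r.toFml xhat)

/-- `A` is an alphabetic formula (an `𝒜`-formula). -/
def IsAForm (m : ℕ) (xhat : Fml) (A : Fml) : Prop := ∃ t : ATree m, t.toFml xhat = A

/-- The code `͞α` of a word `α`: the set of all `𝒜`-formulas `A` with `word(A) = α`. -/
def codeSet {m : ℕ} (xhat : Fml) (α : List (Fin m)) : Set Fml :=
  { A | ∃ t : ATree m, t.word = α ∧ t.toFml xhat = A }

/-- `A*`: the set of substitution instances of `A`. -/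
def Inst (A : Fml) : Set Fml := { B | ∃ σ, Fml.subst σ A = B }

/-- `M*`: the set of substitution instances of members of `M`. -/
def InstSet (M : Set Fml) : Set Fml := { B | ∃ A ∈ M, ∃ σ, Fml.subst σ A = B }

/-- A tag system over the alphabet `Fin m`: the words `ω₁, …, ω_m` and the
deletion number `d`. -/
structure TagSystem (m : ℕ) where
  W : Fin m → List (Fin m)
  d : ℕ

/-- One-step production: `ξ ↦_T ζ` iff `ξ = aᵢβγ` with `|β| = d − 1` and `ζ = γωᵢ`. -/
def TagStep {m : ℕ} (T : TagSystem m) (ξ ζ : List (Fin m)) : Prop :=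
  ∃ (i : Fin m) (β γ : List (Fin m)),
    β.length = T.d - 1 ∧ ξ = i :: (β ++ γ) ∧ ζ = γ ++ T.W i

/-- `ξ ⟾_T ζ`: reflexive-transitive closure of one-step production. -/
def TagProd {m : ℕ} (T : TagSystem m) : List (Fin m) → List (Fin m) → Prop :=
  Relation.ReflTransGen (TagStep T)

/-- `T` halts on `ξ`. -/
def TagHalts {m : ℕ} (T : TagSystem m) (ξ : List (Fin m)) : Prop :=
  ∃ ζ, TagProd T ξ ζ ∧ ζ.length < T.d

/-- The variables `x, y, z, u` used in the axiom schemes. -/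
def Xv : Fml := .var 1
def Yv : Fml := .var 2
def Zv : Fml := .var 3
def Uv : Fml := .var 4

/-- The axioms (R₁)–(R₄). -/
def Raxioms (xhat : Fml) : Set Fml :=
  { .imp (dot xhat Xv (dot xhat Yv Zv)) (dot xhat (dot xhat Xv Yv) Zv),
    .imp (dot xhat (dot xhat Xv Yv) Zv) (dot xhat Xv (dot xhat Yv Zv)),
    .imp (dot xhat (dot xhat Xv (dot xhat Yv Zv)) Uv)
      (dot xhat (dot xhat (dot xhat Xv Yv) Zv) Uv),
    .imp (dot xhat (dot xhat (dot xhat Xv Yv) Zv) Uv)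
      (dot xhat (dot xhat Xv (dot xhat Yv Zv)) Uv) }

/-- The axioms (T₁) and (T₂) of `P_T`. -/
def Taxioms {m : ℕ} (xhat : Fml) (T : TagSystem m) : Set Fml :=
  { F | ∃ (i : Fin m) (α : List (Fin m)) (A B : Fml),
      α.length = T.d - 1 ∧ A ∈ codeSet xhat (i :: α) ∧ B ∈ codeSet xhat (T.W i) ∧
      (F = .imp (dot xhat A Xv) (dot xhat Xv B) ∨ F = .imp A B) }

/-- The calculus `P_T`. -/
def PT {m : ℕ} (xhat : Fml) (T : TagSystem m) : Set Fml := Taxioms xhat T ∪ Raxioms xhat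

/-- `P ⊢ A ⇒ B`: there are `C₀ = A, …, C_n = B` with `P ⊢ Cᵢ → Cᵢ₊₁` for all `i`. -/
def DChain (P : Set Fml) : Fml → Fml → Prop :=
  Relation.ReflTransGen (fun C D => Fml.Deriv P (.imp C D))

/-- `T_α`: the set of `𝒜`-formulas `A` with `α ⟾_T word(A)`. -/
def Tset {m : ℕ} (xhat : Fml) (T : TagSystem m) (α : List (Fin m)) : Set Fml :=
  { A | ∃ t : ATree m, t.toFml xhat = A ∧ TagProd T α t.word }

/-- The halting-condition axioms (H) for the calculus `P₀`. -/
def Haxioms {m : ℕ} (xhat : Fml) (T : TagSystem m) (P₀ : Finset Fml) : Set Fml :=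
  { F | ∃ (α : List (Fin m)) (A B : Fml), α ≠ [] ∧ α.length < T.d ∧
      A ∈ codeSet xhat α ∧ B ∈ P₀ ∧ F = .imp A B }

/-- The calculus `P_{T,P₀}`. -/
def PTP0 {m : ℕ} (xhat : Fml) (T : TagSystem m) (P₀ : Finset Fml) : Set Fml :=
  PT xhat T ∪ Haxioms xhat T P₀

/-- The calculus `P_{T,P₀,ξ}`. -/
def PTP0xi {m : ℕ} (xhat : Fml) (T : TagSystem m) (P₀ : Finset Fml)
    (ξ : List (Fin m)) : Set Fml :=
  PT xhat T ∪ Haxioms xhat T P₀ ∪ codeSet xhat ξ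

/-- `⟨P⟩`: formulas obtained from `P` by one application of modus ponens or
substitution. -/
def stepOnce (P : Set Fml) : Set Fml :=
  { B | ∃ A, A ∈ P ∧ Fml.imp A B ∈ P } ∪ { B | ∃ A ∈ P, ∃ σ, Fml.subst σ A = B }

/-- `⟨P⟩_n`. -/
def stepIter (P : Set Fml) : ℕ → Set Fml
  | 0 => P
  | n + 1 => stepOnce (stepIter P n)

/-- The single axiom `x → (y → x)`. -/
def Kax : Fml := .imp (.var 0) (.imp (.var 1) (.var 0))

/-- An effective encoding of `{→}`-formulas as natural numbers. -/
def encFml : Fml → ℕ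
  | .var n => Nat.pair 0 n
  | .imp A B => Nat.pair 1 (Nat.pair (encFml A) (encFml B))

/-- The fixed effective encoding of `{→}`-calculi (finite sets of formulas)
as natural numbers. -/
def encCalc (P : Finset Fml) : ℕ :=
  Encodable.encode ((P.image encFml).sort (· ≤ ·))


namespace Aux

/-- Size of a formula. -/
def fsize : Fml → ℕ
  | .var _ => 1
  | .imp A B => fsize A + fsize B + 1

lemma fsize_pos (A : Fml) : 0 < fsize A := by cases A <;> simp [fsize]

lemma subst_subst (σ ρ : ℕ → Fml) (C : Fml) :
    Fml.subst σ (Fml.subst ρ C) = Fml.subst (fun n => Fml.subst σ (ρ n)) C := by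
  induction C <;> simp [Fml.subst, *]

lemma subst_congr {σ τ : ℕ → Fml} {C : Fml} (h : ∀ n ∈ C.fvars, σ n = τ n) :
    Fml.subst σ C = Fml.subst τ C := by
  induction C with
  | var n => exact h n (by simp [Fml.fvars])
  | imp A B ihA ihB =>
    simp only [Fml.subst, Fml.imp.injEq]
    refine ⟨ihA fun n hn => h n ?_, ihB fun n hn => h n ?_⟩ <;>
      simp [Fml.fvars, hn]

lemma subst_eq_vars {σ τ : ℕ → Fml} {C : Fml} (h : Fml.subst σ C = Fml.subst τ C) :
    ∀ n ∈ C.fvars, σ n = τ n := by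
  induction C with
  | var k => intro n hn; simp [Fml.fvars] at hn; subst hn; simpa [Fml.subst] using h
  | imp A B ihA ihB =>
    simp only [Fml.subst, Fml.imp.injEq] at h
    intro n hn
    simp only [Fml.fvars, Finset.mem_union] at hn
    rcases hn with hn | hn
    · exact ihA h.1 n hn
    · exact ihB h.2 n hn

lemma hat_subst {xhat : Fml} (hx : xhat.fvars = {0}) (σ : ℕ → Fml) (B : Fml) :
    Fml.subst σ (hat xhat B) = hat xhat (Fml.subst σ B) := by
  unfold hat
  rw [subst_subst]
  apply subst_congr
  intro n hn
  rw [hx] at hn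
  simp only [Finset.mem_singleton] at hn
  subst hn
  simp [Fml.subst]

lemma hat_inj {xhat : Fml} (hx : xhat.fvars = {0}) {A B : Fml}
    (h : hat xhat A = hat xhat B) : A = B := by
  have := subst_eq_vars (C := xhat) h 0 (by rw [hx]; simp)
  simpa using this

lemma circ_subst {xhat : Fml} (hx : xhat.fvars = {0}) (σ : ℕ → Fml) (A B : Fml) :
    Fml.subst σ (circ xhat A B) = circ xhat (Fml.subst σ A) (Fml.subst σ B) := by
  simp [circ, Fml.subst, hat_subst hx]

lemma circ_inj {xhat : Fml} (hx : xhat.fvars = {0}) {A B A' B' : Fml}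
    (h : circ xhat A B = circ xhat A' B') : A = A' ∧ B = B' := by
  unfold circ at h
  injection h with h1 h2
  injection h2 with h3 h4
  injection h1 with h5 h6
  exact ⟨hat_inj hx h3, hat_inj hx h6⟩

/-- Key non-confusion lemma: an instance of `Cform (a+1)` never has the shape
`(L → L) → L`. -/
lemma Cform_ne_shape (σ : ℕ → Fml) (a : ℕ) (L : Fml) :
    Fml.subst σ (Cform (a + 1)) ≠ .imp (.imp L L) L := by
  intro h
  cases a with
  | zero =>
    simp only [Cform, Fml.subst, Fml.imp.injEq] at h
    obtain ⟨h1, h2⟩ := h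
    rw [h2] at h1
    have : fsize L = fsize L + fsize L + 1 := by conv_lhs => rw [h1, fsize]
    omega
  | succ k =>
    simp only [Cform, Fml.subst, Fml.imp.injEq] at h
    obtain ⟨h1, h2⟩ := h
    rw [h1] at h2
    have : fsize L = (fsize L + fsize L + 1) + fsize (Fml.subst σ (Cform k)) + 1 := by
      conv_lhs => rw [← h2, fsize, fsize]
    omega

lemma Cform_inj {σ τ : ℕ → Fml} (h0 : σ 0 = τ 0) :
    ∀ a b : ℕ, Fml.subst σ (Cform a) = Fml.subst τ (Cform b) → a = b := by
  intro a
  induction a with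
  | zero =>
    intro b h
    cases b with
    | zero => rfl
    | succ k =>
      exfalso
      simp only [Cform, Fml.subst] at h
      rw [h0] at h
      have : fsize (τ 0) = fsize (τ 0) + fsize (Fml.subst τ (Cform k)) + 1 := by
        conv_lhs => rw [h, fsize]
      have := fsize_pos (Fml.subst τ (Cform k))
      omega
  | succ k ih =>
    intro b h
    cases b with
    | zero =>
      exfalso
      simp only [Cform, Fml.subst] at h
      rw [h0] at h
      have : fsize (τ 0) = fsize (τ 0) + fsize (Fml.subst σ (Cform k)) + 1 := by
        conv_lhs => rw [← h, fsize]
      have := fsize_pos (Fml.subst σ (Cform k))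
      omega
    | succ j =>
      simp only [Cform, Fml.subst, Fml.imp.injEq] at h
      exact congrArg Nat.succ (ih j h.2)

/-- Main lemma: if instances of two alphabetic formulas coincide, the words
coincide. -/
lemma tree_word_eq {xhat : Fml} (hx : xhat.fvars = {0}) {m : ℕ} :
    ∀ (s t : ATree m) (σ τ : ℕ → Fml),
      Fml.subst σ (s.toFml xhat) = Fml.subst τ (t.toFml xhat) → s.word = t.word := by
  intro s
  induction s with
  | leaf a =>
    intro t σ τ h
    cases t with
    | leaf b =>
      simp only [ATree.toFml, letterCode, circ_subst hx] at h
      obtain ⟨h1, h2⟩ := circ_inj hx h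
      have h0 : σ 0 = τ 0 := by simpa [Fml.subst] using h2
      have := Cform_inj h0 (a.val + 1) (b.val + 1) h1
      have hab : a = b := Fin.ext (by omega)
      simp [ATree.word, hab]
    | node l r =>
      exfalso
      simp only [ATree.toFml, letterCode, dot, circ_subst hx] at h
      obtain ⟨h1, -⟩ := circ_inj hx h
      exact Cform_ne_shape σ a.val _ (by simpa [Fml.subst] using h1)
  | node l r ihl ihr =>
    intro t σ τ h
    cases t with
    | leaf b =>
      exfalso
      simp only [ATree.toFml, letterCode, dot, circ_subst hx] at h
      obtain ⟨h1, -⟩ := circ_inj hx h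
      exact Cform_ne_shape τ b.val _ (by simpa [Fml.subst] using h1.symm)
    | node l' r' =>
      simp only [ATree.toFml, dot, circ_subst hx] at h
      obtain ⟨h1, h2⟩ := circ_inj hx h
      simp only [Fml.subst, Fml.imp.injEq] at h1
      simp only [ATree.word]
      rw [ihl l' σ τ h1.2, ihr r' σ τ h2]

end Aux

/-- No two distinct codes are unifiable: if `α` and `γ` are
distinct nonempty words over `𝒜`, then `͞α* ∩ ͞γ* = ∅`. -/
theorem codes_not_unifiable (xhat : Fml) (hx : xhat.fvars = {0})
    (m : ℕ) (α γ : List (Fin m)) (hα : α ≠ []) (hγ : γ ≠ []) (hne : α ≠ γ) :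
    InstSet (codeSet xhat α) ∩ InstSet (codeSet xhat γ) = ∅ := by
  ext B
  simp only [Set.mem_inter_iff, Set.mem_empty_iff_false, iff_false]
  rintro ⟨⟨A, ⟨s, hs, rfl⟩, σ, hσ⟩, ⟨A', ⟨t, ht, rfl⟩, τ, hτ⟩⟩
  exact hne (hs ▸ ht ▸ Aux.tree_word_eq hx s t σ τ (hσ.trans hτ.symm))

end PC
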